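/- arXiv:2004.01094 — 2 statements merged into one kernel-verified Lean document; each statement's English description precedes it below -/
import Mathlib

section
/- Let g : ℝ^d → [0,∞) be integrable with ∫ g = 1, g ∈ L¹ ∩ L^∞, and suppose g satisfies the functional-equation consequence of vanishing Landau entropy dissipation in dimension d ≥ 2: for almost all v, v* ∈ ℝ^d, the projection of ∇_v √(g(v)g(v*)) − ∇_{v*} √(g(v)g(v*)) onto the hyperplane orthogonal to v − v* vanishes. Assume additionally that g is smooth and strictly positive. Then g is a Maxwellian: there exist ρ > 0, u ∈ ℝ^d, β > 0 with g(v) = ρ (β/π)^{d/2} e^{−β|v−u|²}. -/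
open MeasureTheory


open Submodule in
lemma landau_aux_affine {d : ℕ} (hd : 2 ≤ d)
    (F : EuclideanSpace ℝ (Fin d) → EuclideanSpace ℝ (Fin d))
    (h : ∀ v w, v ≠ w → ∃ c : ℝ, F v - F w = c • (v - w)) :
    ∃ (a : ℝ) (b : EuclideanSpace ℝ (Fin d)), ∀ v, F v = a • v + b := by
  classical
  have hdpos : 0 < d := by omega
  have key : ∀ v : EuclideanSpace ℝ (Fin d), ∃ c : ℝ, v ≠ 0 → F v - F 0 = c • v := by
    intro v
    by_cases hv : v = 0
    · exact ⟨0, fun hc => absurd hv hc⟩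
    · obtain ⟨c, hc⟩ := h v 0 hv
      exact ⟨c, fun _ => by simpa using hc⟩
  choose lam hlam using key
  -- existence of a vector outside any line
  have exout : ∀ v : EuclideanSpace ℝ (Fin d), ∃ u, u ∉ span ℝ ({v} : Set (EuclideanSpace ℝ (Fin d))) := by
    intro v
    by_contra hcon
    push_neg at hcon
    have htop : span ℝ ({v} : Set (EuclideanSpace ℝ (Fin d))) = ⊤ := eq_top_iff'.mpr hcon
    have h1 : Module.finrank ℝ (EuclideanSpace ℝ (Fin d)) ≤ 1 := by
      rw [← finrank_top ℝ (EuclideanSpace ℝ (Fin d)), ← htop]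
      exact finrank_span_le_card ({v} : Set (EuclideanSpace ℝ (Fin d))) |>.trans (by simp)
    rw [finrank_euclideanSpace_fin] at h1
    omega
  have step : ∀ v u : EuclideanSpace ℝ (Fin d), v ≠ 0 →
      u ∉ span ℝ ({v} : Set (EuclideanSpace ℝ (Fin d))) → lam v = lam u := by
    intro v u hv hu
    have hu0 : u ≠ 0 := fun h0 => hu (h0 ▸ zero_mem _)
    have hvu : v ≠ u := fun h0 => hu (h0 ▸ mem_span_singleton_self v)
    obtain ⟨c, hc⟩ := h v u hvu
    have hdiff : lam v • v - lam u • u = c • v - c • u := by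
      have h2 : lam v • v - lam u • u = F v - F u := by
        rw [← hlam v hv, ← hlam u hu0]; abel
      rw [h2, hc, smul_sub]
    have hkey : (lam v - c) • v = (lam u - c) • u := by
      rw [sub_smul, sub_smul]
      linear_combination (norm := module) hdiff
    have huc : lam u = c := by
      by_contra hne
      apply hu
      have : u = (lam u - c)⁻¹ • ((lam v - c) • v) := by
        rw [hkey, smul_smul, inv_mul_cancel₀ (sub_ne_zero.mpr hne), one_smul]
      rw [this, smul_smul]
      exact smul_mem _ _ (mem_span_singleton_self v)
    have hvc : lam v = c := by
      have : (lam v - c) • v = 0 := by rw [hkey, huc, sub_self, zero_smul]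
      rcases smul_eq_zero.mp this with h1 | h1
      · linarith [sub_eq_zero.mp (by exact sub_eq_zero.mpr (by linarith [h1] : lam v = c))]
      · exact absurd h1 hv
    rw [hvc, huc]
  -- constancy of lam on nonzero vectors
  set v0 : EuclideanSpace ℝ (Fin d) := EuclideanSpace.single ⟨0, hdpos⟩ (1 : ℝ) with hv0def
  have hv0 : v0 ≠ 0 := by
    intro hc
    have : (1 : ℝ) = 0 := by
      have := congrArg (fun x => x ⟨0, hdpos⟩) hc
      simpa [v0, EuclideanSpace.single_apply] using this
    norm_num at this
  have hconst : ∀ v : EuclideanSpace ℝ (Fin d), v ≠ 0 → lam v = lam v0 := by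
    intro v hv
    by_cases hmem : v ∈ span ℝ ({v0} : Set (EuclideanSpace ℝ (Fin d)))
    · obtain ⟨u, hu⟩ := exout v
      have hspan : span ℝ ({v} : Set (EuclideanSpace ℝ (Fin d)))
          = span ℝ ({v0} : Set (EuclideanSpace ℝ (Fin d))) := by
        obtain ⟨t, ht⟩ := mem_span_singleton.mp hmem
        have ht0 : t ≠ 0 := by
          intro h0; apply hv; rw [← ht, h0, zero_smul]
        rw [← ht]
        exact span_singleton_smul_eq (IsUnit.mk0 t ht0) v0
      have hu' : u ∉ span ℝ ({v0} : Set (EuclideanSpace ℝ (Fin d))) := hspan ▸ hu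
      rw [step v u hv hu, ← step v0 u hv0 hu']
    · exact (step v0 v hv0 hmem).symm ▸ (step v0 v hv0 hmem).symm
  refine ⟨lam v0, F 0, fun v => ?_⟩
  by_cases hv : v = 0
  · simp [hv]
  · have := hlam v hv
    rw [hconst v hv] at this
    rw [← this]; abel


/-- Classification of equilibria of the Landau entropy dissipation: a smooth, strictly positive,
integrable probability density g on ℝ^d (d ≥ 2), bounded, such that for all v ≠ v* the vector
∇_v √(g(v)g(v*)) − ∇_{v*} √(g(v)g(v*)) is parallel to v − v* (i.e. its projection onto the
hyperplane orthogonal to v − v* vanishes), must be a Maxwellian. -/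
theorem landau_equilibria_are_maxwellians (d : ℕ) (hd : 2 ≤ d)
    (g : EuclideanSpace ℝ (Fin d) → ℝ)
    (hpos : ∀ v, 0 < g v)
    (hsmooth : ContDiff ℝ (⊤ : ℕ∞) g)
    (hint : Integrable g)
    (hmass : (∫ v : EuclideanSpace ℝ (Fin d), g v) = 1)
    (hbdd : ∃ C : ℝ, ∀ v, g v ≤ C)
    (hdiss : ∀ v w : EuclideanSpace ℝ (Fin d), v ≠ w →
      ∃ c : ℝ,
        Real.sqrt (g w) • gradient (fun y => Real.sqrt (g y)) v
          - Real.sqrt (g v) • gradient (fun y => Real.sqrt (g y)) w = c • (v - w)) :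
    ∃ (ρ β : ℝ) (u : EuclideanSpace ℝ (Fin d)), 0 < ρ ∧ 0 < β ∧
      ∀ v, g v = ρ * (β / Real.pi) ^ ((d : ℝ) / 2) * Real.exp (-β * ‖v - u‖ ^ 2) := by

  classical
  have hdpos : 0 < d := by omega
  set h : EuclideanSpace ℝ (Fin d) → ℝ := fun y => Real.sqrt (g y) with hhdef
  have hsqpos : ∀ v, 0 < Real.sqrt (g v) := fun v => Real.sqrt_pos.mpr (hpos v)
  have hg_fd : ∀ v, HasFDerivAt g (fderiv ℝ g v) v := fun v =>
    ((hsmooth.differentiable (by simp)) v).hasFDerivAt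
  have hh_fd : ∀ v, HasFDerivAt h ((1 / (2 * Real.sqrt (g v))) • fderiv ℝ g v) v :=
    fun v => (hg_fd v).sqrt (hpos v).ne'
  set F : EuclideanSpace ℝ (Fin d) → EuclideanSpace ℝ (Fin d) :=
    fun v => (Real.sqrt (g v))⁻¹ • gradient h v with hFdef
  have hF : ∀ v w, v ≠ w → ∃ c : ℝ, F v - F w = c • (v - w) := by
    intro v w hvw
    obtain ⟨c, hc⟩ := hdiss v w hvw
    refine ⟨(Real.sqrt (g v) * Real.sqrt (g w))⁻¹ * c, ?_⟩
    have key : F v - F w = (Real.sqrt (g v) * Real.sqrt (g w))⁻¹ •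
        (Real.sqrt (g w) • gradient h v - Real.sqrt (g v) • gradient h w) := by
      rw [smul_sub, smul_smul, smul_smul, hFdef]
      have e1 : (Real.sqrt (g v) * Real.sqrt (g w))⁻¹ * Real.sqrt (g w)
          = (Real.sqrt (g v))⁻¹ := by
        rw [mul_inv, mul_assoc, inv_mul_cancel₀ (hsqpos w).ne', mul_one]
      have e2 : (Real.sqrt (g v) * Real.sqrt (g w))⁻¹ * Real.sqrt (g v)
          = (Real.sqrt (g w))⁻¹ := by
        rw [mul_comm (Real.sqrt (g v)) (Real.sqrt (g w)), mul_inv, mul_assoc,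
          inv_mul_cancel₀ (hsqpos v).ne', mul_one]
      rw [e1, e2]
    rw [key, hc, smul_smul]
  obtain ⟨a, b, hab⟩ := landau_aux_affine hd F hF
  have hgrad : ∀ v, gradient h v = Real.sqrt (g v) • (a • v + b) := by
    intro v
    have h1 : F v = a • v + b := hab v
    rw [hFdef] at h1
    have h2 := congrArg (fun x => Real.sqrt (g v) • x) h1
    simpa [smul_smul, mul_inv_cancel₀ (hsqpos v).ne'] using h2
  have hlog : ∀ v, HasFDerivAt (fun y => Real.log (g y))
      ((2 : ℝ) • (InnerProductSpace.toDual ℝ (EuclideanSpace ℝ (Fin d)) (a • v + b)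
        : EuclideanSpace ℝ (Fin d) →L[ℝ] ℝ)) v := by
    intro v
    have h1 := (hg_fd v).log (hpos v).ne'
    have hfh : fderiv ℝ h v = (1 / (2 * Real.sqrt (g v))) • fderiv ℝ g v := (hh_fd v).fderiv
    have hfh2 : fderiv ℝ h v = InnerProductSpace.toDual ℝ (EuclideanSpace ℝ (Fin d))
        (Real.sqrt (g v) • (a • v + b)) := by
      have h3 := hgrad v
      rw [gradient] at h3
      exact (InnerProductSpace.toDual ℝ (EuclideanSpace ℝ (Fin d))).symm_apply_eq.mp h3
    have hfg : fderiv ℝ g v = (2 * Real.sqrt (g v)) • fderiv ℝ h v := by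
      rw [hfh, smul_smul, mul_one_div,
        div_self (by have := hsqpos v; linarith : (0:ℝ) < 2 * Real.sqrt (g v)).ne', one_smul]
    have hmain : (g v)⁻¹ • fderiv ℝ g v
        = (2 : ℝ) • (InnerProductSpace.toDual ℝ (EuclideanSpace ℝ (Fin d)) (a • v + b)
          : EuclideanSpace ℝ (Fin d) →L[ℝ] ℝ) := by
      rw [hfg, hfh2, _root_.map_smul, smul_smul, smul_smul]
      congr 1
      have hsq : Real.sqrt (g v) * Real.sqrt (g v) = g v := Real.mul_self_sqrt (hpos v).le
      field_simp [(hpos v).ne']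
      linear_combination hsq
    rw [← hmain]
    exact h1
  set q : EuclideanSpace ℝ (Fin d) → ℝ :=
    fun v => Real.log (g v) - (a * ‖v‖ ^ 2 + 2 * (inner ℝ b v : ℝ)) with hqdef
  have hq' : ∀ v, HasFDerivAt q (0 : EuclideanSpace ℝ (Fin d) →L[ℝ] ℝ) v := by
    intro v
    have h1 := (hasStrictFDerivAt_norm_sq v).hasFDerivAt.const_mul a
    have h2 := ((innerSL ℝ b).hasFDerivAt (x := v)).const_mul (2 : ℝ)
    have h3 := (hlog v).sub (h1.add h2)
    have hzero : (2 : ℝ) • (InnerProductSpace.toDual ℝ (EuclideanSpace ℝ (Fin d)) (a • v + b)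
          : EuclideanSpace ℝ (Fin d) →L[ℝ] ℝ)
        - (a • (2 • (innerSL ℝ v)) + (2 : ℝ) • (innerSL ℝ b)) = 0 := by
      ext w
      simp only [ContinuousLinearMap.sub_apply, ContinuousLinearMap.add_apply,
        ContinuousLinearMap.smul_apply, ContinuousLinearMap.zero_apply,
        InnerProductSpace.toDual_apply_apply, innerSL_apply_apply, smul_eq_mul]
      rw [inner_add_left, real_inner_smul_left]
      push_cast
      ring
    rw [hzero] at h3
    exact h3
  have hqdiff : Differentiable ℝ q := fun v => (hq' v).differentiableAt
  have hqconst : ∀ v, q v = q 0 := fun v =>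
    is_const_of_fderiv_eq_zero hqdiff (fun x => (hq' x).fderiv) v 0
  set C0 : ℝ := Real.log (g 0) with hC0def
  have hglog : ∀ v, g v = Real.exp (a * ‖v‖ ^ 2 + 2 * (inner ℝ b v : ℝ) + C0) := by
    intro v
    have h1 := hqconst v
    rw [hqdef] at h1
    simp only [norm_zero, inner_zero_right] at h1
    have h2 : Real.log (g v) = a * ‖v‖ ^ 2 + 2 * (inner ℝ b v : ℝ) + C0 := by
      rw [hC0def]; push_cast at h1 ⊢; linarith
    rw [← h2, Real.exp_log (hpos v)]
  obtain ⟨C, hC⟩ := hbdd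
  have hCpos : 0 < C := lt_of_lt_of_le (hpos 0) (hC 0)
  rcases lt_trichotomy a 0 with ha | ha | ha
  · -- a < 0 : Maxwellian
    set β : ℝ := -a with hβdef
    have hβ : 0 < β := by rw [hβdef]; linarith
    set u : EuclideanSpace ℝ (Fin d) := β⁻¹ • b with hudef
    have hbu : b = β • u := by rw [hudef, smul_smul, mul_inv_cancel₀ hβ.ne', one_smul]
    set K : ℝ := Real.exp (C0 - a * ‖u‖ ^ 2) with hKdef
    have hform : ∀ v, g v = K * Real.exp (-β * ‖v - u‖ ^ 2) := by
      intro v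
      rw [hglog v, hKdef, ← Real.exp_add]
      congr 1
      have hns : ‖v - u‖ ^ 2 = ‖v‖ ^ 2 - 2 * (inner ℝ v u : ℝ) + ‖u‖ ^ 2 := norm_sub_sq_real v u
      have hbv : (inner ℝ b v : ℝ) = β * (inner ℝ v u : ℝ) := by
        rw [hbu, real_inner_smul_left, real_inner_comm]
      rw [hns, hbv, hβdef]
      ring
    refine ⟨K * (Real.pi / β) ^ ((d : ℝ) / 2), β, u, ?_, hβ, ?_⟩
    · have hK : (0:ℝ) < K := Real.exp_pos _
      have hpi := Real.pi_pos
      positivity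
    · intro v
      have hmul : (Real.pi / β) ^ ((d : ℝ) / 2) * (β / Real.pi) ^ ((d : ℝ) / 2) = 1 := by
        rw [← Real.mul_rpow (by positivity) (by positivity),
          show Real.pi / β * (β / Real.pi) = 1 by
            field_simp]
        simp
      rw [hform v, mul_assoc K, hmul, mul_one]
  · -- a = 0
    by_cases hb : b = 0
    · exfalso
      have hgc : g = fun _ : EuclideanSpace ℝ (Fin d) => Real.exp C0 := by
        funext v; rw [hglog v, ha, hb]; simp
      rw [hgc] at hint
      haveI : Nontrivial (EuclideanSpace ℝ (Fin d)) := by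
        refine ⟨⟨EuclideanSpace.single ⟨0, hdpos⟩ (1 : ℝ), 0, ?_⟩⟩
        intro hc
        have h1 := congrArg (fun x => x ⟨0, hdpos⟩) hc
        simp [EuclideanSpace.single_apply] at h1
      have huniv : (volume : Measure (EuclideanSpace ℝ (Fin d))) Set.univ = ⊤ :=
        MeasureTheory.measure_univ_of_isAddLeftInvariant volume
      rcases (integrable_const_iff).mp hint with h1 | h1
      · exact (Real.exp_pos C0).ne' h1
      · haveI := h1; exact measure_ne_top _ _ huniv
    · exfalso
      set t : ℝ := (Real.log C - C0 + 1) / (2 * ‖b‖ ^ 2) with htdef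
      have hbpos : 0 < ‖b‖ ^ 2 := by have : ‖b‖ ≠ 0 := norm_ne_zero_iff.mpr hb; positivity
      have hval : g (t • b) = Real.exp (2 * t * ‖b‖ ^ 2 + C0) := by
        rw [hglog (t • b), ha]
        congr 1
        rw [real_inner_smul_right, real_inner_self_eq_norm_sq]
        ring
      have h2 : 2 * t * ‖b‖ ^ 2 + C0 = Real.log C + 1 := by
        rw [htdef]; field_simp; ring
      have h3 : C < g (t • b) := by
        rw [hval, h2]
        calc C = Real.exp (Real.log C) := (Real.exp_log hCpos).symm
        _ < Real.exp (Real.log C + 1) := by apply Real.exp_lt_exp.mpr; linarith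
      exact absurd (hC (t • b)) (not_le.mpr h3)
  · -- a > 0
    exfalso
    set e : EuclideanSpace ℝ (Fin d) := EuclideanSpace.single ⟨0, hdpos⟩ (1 : ℝ) with hedef
    have hne : ‖e‖ = 1 := by
      rw [hedef, EuclideanSpace.norm_single]; norm_num
    set M : ℝ := max 0 (Real.log (C ^ 2) - 2 * C0) with hMdef
    set t : ℝ := Real.sqrt ((M + 1) / (2 * a)) with htdef
    have hMnn : 0 ≤ M := le_max_left _ _
    have ht2 : t ^ 2 = (M + 1) / (2 * a) := by
      rw [htdef, Real.sq_sqrt (by positivity)]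
    set v : EuclideanSpace ℝ (Fin d) := t • e with hvdef
    have hnv : ‖v‖ ^ 2 = t ^ 2 := by
      rw [hvdef, norm_smul, mul_pow, hne, Real.norm_eq_abs, sq_abs]; ring
    have hnv' : ‖-v‖ ^ 2 = t ^ 2 := by rw [norm_neg, hnv]
    have hprod : g v * g (-v) = Real.exp (2 * a * t ^ 2 + 2 * C0) := by
      rw [hglog v, hglog (-v), ← Real.exp_add, hnv, hnv', inner_neg_right]
      congr 1
      ring
    have hub : g v * g (-v) ≤ C ^ 2 := by
      calc g v * g (-v) ≤ C * C := mul_le_mul (hC v) (hC (-v)) (hpos (-v)).le hCpos.le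
      _ = C ^ 2 := by ring
    have hlb : C ^ 2 < g v * g (-v) := by
      rw [hprod]
      have h1 : 2 * a * t ^ 2 = M + 1 := by
        rw [ht2]; field_simp
      have h2 : Real.log (C ^ 2) < 2 * a * t ^ 2 + 2 * C0 := by
        rw [h1]
        have h4 : Real.log (C ^ 2) - 2 * C0 ≤ M := le_max_right _ _
        linarith
      calc C ^ 2 = Real.exp (Real.log (C ^ 2)) := (Real.exp_log (by positivity)).symm
      _ < _ := Real.exp_lt_exp.mpr h2
    linarith
end

section
/- Let U₁, U₂ ∈ C²(𝕋^d) satisfy ΔU_i = e^{V_i + U_i} − 1 on 𝕋^d, where V₁, V₂ ∈ C(𝕋^d) with ‖V_i‖_{L^∞} ≤ K. Then ‖∇U₁ − ∇U₂‖²_{L²(𝕋^d)} ≤ e^{C(K)} ‖V₁ − V₂‖²_{L²(𝕋^d)} for a constant C(K) depending only on K and d; in fact one can take the bound ∫|∇(U₁−U₂)|² ≤ ∫ e^{V₁+U₁}(V₂ − V₁)(U₂ − U₁) ≤ e^{K + sup U₁} ‖V₁−V₂‖_{L²} ‖U₁−U₂‖_{L²}, combined with a Poincaré-type control of ‖U₁−U₂‖_{L²}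 by ‖∇(U₁−U₂)‖_{L²} plus the mean, where the mean is controlled using the monotonicity of the exponential. -/
/-!
On the torus (ℤᵈ-periodic functions, integrated over the fundamental domain `[0,1)ᵈ`) the
maximum principle gives `Uᵢ ≤ K`: at a maximum of `Uᵢ` we have `0 ≥ ΔUᵢ = e^{Vᵢ+Uᵢ} - 1`, so
`Uᵢ ≤ -Vᵢ ≤ K` there. For `W = U₁ - U₂`, integrating `div (W ∇W) = |∇W|² + W ΔW` over the
torus gives `∫ |∇W|² = -∫ W (e^a - e^b)` with `a = V₁ + U₁`, `b = V₂ + U₂`, and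
`W = (a - b) - (V₁ - V₂)`. Since `a, b ≤ 2K`, monotonicity and the Lipschitz bound of `exp`
on `(-∞, 2K]` give `(e^a - e^b)² ≤ e^{2K} (a - b)(e^a - e^b)`, which absorbs the cross term:
pointwise `-W (e^a - e^b) ≤ e^{2K} (V₁ - V₂)²`.
-/

open MeasureTheory Set Function Real

theorem Function.Periodic.of_mem_span_int {E β : Type*} [AddCommGroup E] {f : E → β} {s : Set E}
    (hs : ∀ c ∈ s, Periodic f c) {c : E} (hc : c ∈ Submodule.span ℤ s) : Periodic f c := by
  induction hc using Submodule.span_induction with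
  | mem c h => exact hs c h
  | zero => simp [Periodic]
  | add _ _ _ _ h₁ h₂ => exact h₁.add_period h₂
  | smul m _ _ h => exact h.zsmul m

theorem IsLocalMax.deriv_deriv_nonpos {g : ℝ → ℝ} {t₀ : ℝ} (h : IsLocalMax g t₀)
    (hg : ContinuousAt g t₀) : deriv (deriv g) t₀ ≤ 0 := by
  by_contra! hpos
  obtain ⟨ε, hε, hball⟩ := Metric.eventually_nhds_iff_ball.1
    ((h.and (eventually_nhdsWithin_sign_eq_of_deriv_pos hpos h.deriv_eq_zero)))
  have hderiv_pos : ∀ t ∈ Ioo t₀ (t₀ + ε), 0 < deriv g t := fun t ht => by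
    have hsign := (hball t (by rw [Real.ball_eq_Ioo]; exact ⟨by linarith [ht.1], ht.2⟩)).2
    rwa [sign_pos (sub_pos.2 ht.1), sign_eq_one_iff] at hsign
  have hcont : ContinuousOn g (Icc t₀ (t₀ + ε / 2)) := fun t ht => by
    rcases ht.1.eq_or_lt with rfl | ht₀
    · exact hg.continuousWithinAt
    · exact (differentiableAt_of_deriv_ne_zero
        (hderiv_pos t ⟨ht₀, by linarith [ht.2]⟩).ne').continuousAt.continuousWithinAt
  have hmono : StrictMonoOn g (Icc t₀ (t₀ + ε / 2)) :=
    strictMonoOn_of_deriv_pos (convex_Icc _ _) hcont fun t ht => by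
      rw [interior_Icc] at ht
      exact hderiv_pos t ⟨ht.1, by linarith [ht.2]⟩
  have hlt : g t₀ < g (t₀ + ε / 2) :=
    hmono (left_mem_Icc.2 (by linarith)) (right_mem_Icc.2 (by linarith)) (by linarith)
  have hle : g (t₀ + ε / 2) ≤ g t₀ :=
    (hball _ (by rw [Real.ball_eq_Ioo]; constructor <;> linarith)).1
  linarith

theorem IsLocalMax.fderiv_fderiv_apply_nonpos {F : Type*} [NormedAddCommGroup F] [NormedSpace ℝ F]
    {U : F → ℝ} {x₀ : F} (h : IsLocalMax U x₀) (hU : ContDiff ℝ 2 U) (v : F) :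
    fderiv ℝ (fun z => fderiv ℝ U z v) x₀ v ≤ 0 := by
  have hline : ∀ t : ℝ, HasDerivAt (fun s : ℝ => x₀ + s • v) v t := fun t => by
    simpa using ((hasDerivAt_id t).smul_const v).const_add x₀
  have hDU : ContDiff ℝ 1 fun z => fderiv ℝ U z v :=
    (hU.fderiv_right (m := 1) (by norm_num)).clm_apply contDiff_const
  have hderiv : deriv (fun t : ℝ => U (x₀ + t • v)) = fun t => fderiv ℝ U (x₀ + t • v) v :=
    funext fun t => ((hU.differentiable (by norm_num) _).hasFDerivAt.comp_hasDerivAt t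
      (hline t)).deriv
  have hderiv2 : deriv (fun t : ℝ => fderiv ℝ U (x₀ + t • v) v) 0 =
      fderiv ℝ (fun z => fderiv ℝ U z v) x₀ v := by
    simpa [Function.comp_def] using
      ((hDU.differentiable one_ne_zero _).hasFDerivAt.comp_hasDerivAt 0 (hline 0)).deriv
  have hmax : IsLocalMax (fun t : ℝ => U (x₀ + t • v)) 0 :=
    IsLocalMax.comp_continuous (g := fun t : ℝ => x₀ + t • v) (by simpa using h)
      (hline 0).continuousAt
  rw [← hderiv2, ← hderiv]
  exact hmax.deriv_deriv_nonpos
    (hU.continuous.comp (continuous_const.add (continuous_id.smul continuous_const))).continuousAt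

theorem Real.exp_sub_exp_le_of_le {a b L : ℝ} (hba : b ≤ a) (haL : a ≤ L) :
    exp a - exp b ≤ exp L * (a - b) := by
  have h1 : 1 - exp (b - a) ≤ a - b := by linarith [add_one_le_exp (b - a)]
  have h2 : exp a * exp (b - a) = exp b := by rw [← exp_add, add_sub_cancel]
  calc exp a - exp b = exp a * (1 - exp (b - a)) := by rw [mul_sub, mul_one, h2]
    _ ≤ exp L * (a - b) :=
      mul_le_mul (exp_le_exp.2 haL) h1 (by linarith [exp_le_one_iff.2 (sub_nonpos.2 hba)])
        (exp_pos L).le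

theorem Real.sq_exp_sub_exp_le {a b L : ℝ} (ha : a ≤ L) (hb : b ≤ L) :
    (exp a - exp b) ^ 2 ≤ exp L * ((a - b) * (exp a - exp b)) := by
  wlog hba : b ≤ a generalizing a b
  · have := this hb ha (le_of_not_ge hba)
    linarith
  have hE : 0 ≤ exp a - exp b := sub_nonneg.2 (exp_le_exp.2 hba)
  calc (exp a - exp b) ^ 2 = (exp a - exp b) * (exp a - exp b) := sq _
    _ ≤ (exp L * (a - b)) * (exp a - exp b) :=
      mul_le_mul_of_nonneg_right (exp_sub_exp_le_of_le hba ha) hE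
    _ = exp L * ((a - b) * (exp a - exp b)) := by ring

theorem Real.mul_exp_sub_exp_le {a b δ L : ℝ} (ha : a ≤ L) (hb : b ≤ L) :
    (δ - (a - b)) * (exp a - exp b) ≤ exp L * δ ^ 2 := by
  have hM := exp_pos L
  have hsq := sq_exp_sub_exp_le ha hb
  have : exp L * ((δ - (a - b)) * (exp a - exp b)) ≤ exp L * (exp L * δ ^ 2) := by
    nlinarith [sq_nonneg (exp a - exp b - exp L * δ)]
  exact le_of_mul_le_mul_left this hM

section Torus

variable {d : ℕ}

local notation "ℝᵈ" => EuclideanSpace ℝ (Fin d)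

def unitCube (d : ℕ) : Set (EuclideanSpace ℝ (Fin d)) := {x | ∀ i, x i ∈ Ico 0 1}

theorem unitCube_eq_fundamentalDomain :
    unitCube d = ZSpan.fundamentalDomain (EuclideanSpace.basisFun (Fin d) ℝ).toBasis := by
  ext x; simp [unitCube, ZSpan.mem_fundamentalDomain]

theorem isCompact_closure_unitCube : IsCompact (closure (unitCube d)) :=
  unitCube_eq_fundamentalDomain ▸ (ZSpan.fundamentalDomain_isBounded _).isCompact_closure

theorem Continuous.integrableOn_unitCube {f : ℝᵈ → ℝ} (hf : Continuous f) :
    IntegrableOn f (unitCube d) :=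
  (hf.continuousOn.integrableOn_compact isCompact_closure_unitCube).mono_set subset_closure

theorem measurableSet_unitCube : MeasurableSet (unitCube d) :=
  unitCube_eq_fundamentalDomain ▸ ZSpan.fundamentalDomain_measurableSet _

theorem exists_forall_le_of_periodic {f : ℝᵈ → ℝ} (hf : Continuous f)
    (hper : ∀ k, Periodic f (EuclideanSpace.single k 1)) : ∃ x₀, ∀ x, f x ≤ f x₀ := by
  obtain ⟨x₀, -, hx₀⟩ := isCompact_closure_unitCube.exists_isMaxOn
    ⟨0, subset_closure fun i => by simp⟩ hf.continuousOn
  refine ⟨x₀, fun x => ?_⟩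
  set b := (EuclideanSpace.basisFun (Fin d) ℝ).toBasis
  have hfloor : Periodic f (ZSpan.floor b x) := by
    refine Periodic.of_mem_span_int (s := range b) ?_ (ZSpan.floor b x).2
    rintro _ ⟨k, rfl⟩
    simpa [b] using hper k
  have hfract : ZSpan.fract b x ∈ unitCube d :=
    unitCube_eq_fundamentalDomain ▸ ZSpan.fract_mem_fundamentalDomain b x
  calc f x = f (ZSpan.fract b x) := by rw [ZSpan.fract_apply, hfloor.sub_eq]
    _ ≤ f x₀ := hx₀ (subset_closure hfract)

theorem toLp_preimage_unitCube :
    WithLp.toLp 2 ⁻¹' unitCube d = univ.pi fun _ => Ico (0 : ℝ) 1 := by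
  ext; simp [unitCube]

theorem setIntegral_unitCube_eq {f : ℝᵈ → ℝ} :
    ∫ x in unitCube d, f x = ∫ y in Icc (0 : Fin d → ℝ) 1, f (WithLp.toLp 2 y) := by
  have hIco : (univ.pi fun _ => Ico (0 : ℝ) 1) =ᵐ[volume] Icc (0 : Fin d → ℝ) 1 :=
    Measure.univ_pi_Ico_ae_eq_Icc
  rw [← setIntegral_congr_set hIco, ← toLp_preimage_unitCube]
  exact ((PiLp.volume_preserving_toLp (Fin d)).setIntegral_preimage_emb
    (MeasurableEquiv.toLp 2 (Fin d → ℝ)).measurableEmbedding f _).symm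

noncomputable def partialDeriv (i : Fin d) (f : ℝᵈ → ℝ) (x : ℝᵈ) : ℝ :=
  fderiv ℝ f x (EuclideanSpace.single i 1)

theorem integral_unitCube_sum_partialDeriv_eq_zero {F : Fin d → ℝᵈ → ℝ}
    (hF : ∀ i, ContDiff ℝ 1 (F i)) (hper : ∀ i, Periodic (F i) (EuclideanSpace.single i 1)) :
    ∫ x in unitCube d, ∑ i, partialDeriv i (F i) x = 0 := by
  rcases d with _ | n
  · simp
  let L := (PiLp.continuousLinearEquiv 2 ℝ fun _ : Fin (n + 1) => ℝ).symm
  have hdiv := integral_divergence_of_hasFDerivAt_off_countable' 0 1 zero_le_one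
    (fun i y => F i (L y)) (fun i y => (fderiv ℝ (F i) (L y)).comp (L : _ →L[ℝ] _)) ∅
    countable_empty (fun i => ((hF i).continuous.comp L.continuous).continuousOn)
    (fun y _ i => ((hF i).differentiable one_ne_zero _).hasFDerivAt.comp y L.hasFDerivAt)
    (Continuous.integrableOn_Icc <| continuous_finsetSum _ fun i _ =>
      ((hF i).continuous_fderiv one_ne_zero |>.comp L.continuous).clm_apply continuous_const)
  have hfaces : ∀ i (y : Fin n → ℝ), F i (L (Fin.insertNth i (1 : ℝ) y)) =
      F i (L (Fin.insertNth i (0 : ℝ) y)) := by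
    intro i y
    have : (Fin.insertNth i (1 : ℝ) y : Fin (n + 1) → ℝ) = Fin.insertNth i 0 y + Pi.single i 1 := by
      ext j
      exact Fin.succAboveCases i (by simp) (fun k => by simp) j
    rw [this, map_add]
    exact hper i _
  -- opposite faces of `[0,1]ᵈ` cancel by periodicity
  simp only [Pi.one_apply, Pi.zero_apply, hfaces, sub_self, Finset.sum_const_zero] at hdiv
  rw [setIntegral_unitCube_eq, ← hdiv]
  rfl

noncomputable def laplacian (f : ℝᵈ → ℝ) (x : ℝᵈ) :
    ℝ :=
  ∑ i, partialDeriv i (partialDeriv i f) x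

theorem Function.Periodic.partialDeriv {f : ℝᵈ → ℝ}
    {c : ℝᵈ} (hf : Periodic f c) (i : Fin d) :
    Periodic (partialDeriv i f) c := fun x => by
  simp only [_root_.partialDeriv, ← fderiv_comp_add_right, hf.funext]

theorem ContDiff.partialDeriv {n : WithTop ℕ∞} {f : ℝᵈ → ℝ}
    (hf : ContDiff ℝ (n + 1) f) (i : Fin d) : ContDiff ℝ n (partialDeriv i f) :=
  (hf.fderiv_right le_rfl).clm_apply contDiff_const

theorem partialDeriv_sub {f g : ℝᵈ → ℝ} {x : ℝᵈ}
    (hf : DifferentiableAt ℝ f x) (hg : DifferentiableAt ℝ g x) (i : Fin d) :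
    partialDeriv i (fun y => f y - g y) x = partialDeriv i f x - partialDeriv i g x := by
  simp [_root_.partialDeriv, fderiv_fun_sub hf hg]

theorem partialDeriv_mul {f g : ℝᵈ → ℝ} {x : ℝᵈ}
    (hf : DifferentiableAt ℝ f x) (hg : DifferentiableAt ℝ g x) (i : Fin d) :
    partialDeriv i (fun y => f y * g y) x =
      f x * partialDeriv i g x + g x * partialDeriv i f x := by
  simp [_root_.partialDeriv, fderiv_fun_mul hf hg]

theorem laplacian_sub {f g : ℝᵈ → ℝ} (hf : ContDiff ℝ 2 f)
    (hg : ContDiff ℝ 2 g) (x : ℝᵈ) :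
    laplacian (fun y => f y - g y) x = laplacian f x - laplacian g x := by
  have hf' := hf.differentiable (by norm_num)
  have hg' := hg.differentiable (by norm_num)
  have : ∀ i, partialDeriv i (fun y => f y - g y) =
      fun y => partialDeriv i f y - partialDeriv i g y :=
    fun i => funext fun y => partialDeriv_sub (hf' y) (hg' y) i
  simp only [laplacian, this, ← Finset.sum_sub_distrib]
  exact Finset.sum_congr rfl fun i _ => partialDeriv_sub
    ((hf.partialDeriv (n := 1) i).differentiable one_ne_zero x)
    ((hg.partialDeriv (n := 1) i).differentiable one_ne_zero x) i

theorem ContDiff.continuous_laplacian {f : ℝᵈ → ℝ} (hf : ContDiff ℝ 2 f) :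
    Continuous (laplacian f) :=
  continuous_finsetSum _ fun i _ =>
    ((hf.partialDeriv (n := 1) i).partialDeriv (n := 0) i).continuous

theorem IsLocalMax.laplacian_nonpos {U : ℝᵈ → ℝ}
    {x₀ : ℝᵈ} (h : IsLocalMax U x₀) (hU : ContDiff ℝ 2 U) :
    laplacian U x₀ ≤ 0 :=
  Finset.sum_nonpos fun _ _ => h.fderiv_fderiv_apply_nonpos hU _

theorem le_of_laplacian_eq_exp_sub_one {U V : ℝᵈ → ℝ} {K : ℝ}
    (hU : ContDiff ℝ 2 U) (hper : ∀ k, Periodic U (EuclideanSpace.single k 1))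
    (hΔ : ∀ x, laplacian U x = exp (V x + U x) - 1) (hV : ∀ x, -K ≤ V x)
    (x : ℝᵈ) : U x ≤ K := by
  obtain ⟨x₀, hx₀⟩ := exists_forall_le_of_periodic hU.continuous hper
  have hmax : IsLocalMax U x₀ := Filter.Eventually.of_forall hx₀
  have : V x₀ + U x₀ ≤ 0 := by simpa [hΔ] using hmax.laplacian_nonpos hU
  linarith [hx₀ x, hV x₀]

theorem integral_unitCube_sum_sq_partialDeriv_eq_neg_integral_mul_laplacian {W : ℝᵈ → ℝ}
    (hW : ContDiff ℝ 2 W) (hper : ∀ k, Periodic W (EuclideanSpace.single k 1)) :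
    ∫ x in unitCube d, ∑ i, partialDeriv i W x ^ 2 =
      -∫ x in unitCube d, W x * laplacian W x := by
  have hW' := hW.differentiable (by norm_num)
  have hdiv : ∀ x, ∑ i, partialDeriv i (fun y => W y * partialDeriv i W y) x =
      ∑ i, partialDeriv i W x ^ 2 + W x * laplacian W x := fun x => by
    rw [laplacian, Finset.mul_sum, ← Finset.sum_add_distrib]
    refine Finset.sum_congr rfl fun i _ => ?_
    rw [partialDeriv_mul (hW' x) ((hW.partialDeriv (n := 1) i).differentiable one_ne_zero x)]
    ring
  have hzero := integral_unitCube_sum_partialDeriv_eq_zero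
    (F := fun i y => W y * partialDeriv i W y)
    (fun i => (hW.of_le (by norm_num)).mul (hW.partialDeriv (n := 1) i))
    (fun i x => by simp only [hper i x, (hper i).partialDeriv i x])
  have hgrad : Continuous fun x => ∑ i, partialDeriv i W x ^ 2 :=
    continuous_finsetSum _ fun i _ => (hW.partialDeriv (n := 1) i).continuous.pow 2
  have hprod : Continuous fun x => W x * laplacian W x :=
    hW.continuous.mul hW.continuous_laplacian
  simp only [hdiv] at hzero
  rw [integral_add hgrad.integrableOn_unitCube hprod.integrableOn_unitCube] at hzero
  linarith

theorem integral_unitCube_sum_sq_partialDeriv_sub_le {V₁ V₂ U₁ U₂ : ℝᵈ → ℝ} {L : ℝ}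
    (hV₁ : Continuous V₁) (hV₂ : Continuous V₂) (hU₁ : ContDiff ℝ 2 U₁) (hU₂ : ContDiff ℝ 2 U₂)
    (hU₁p : ∀ k, Periodic U₁ (EuclideanSpace.single k 1))
    (hU₂p : ∀ k, Periodic U₂ (EuclideanSpace.single k 1))
    (hΔ₁ : ∀ x, laplacian U₁ x = exp (V₁ x + U₁ x) - 1)
    (hΔ₂ : ∀ x, laplacian U₂ x = exp (V₂ x + U₂ x) - 1)
    (hL₁ : ∀ x, V₁ x + U₁ x ≤ L) (hL₂ : ∀ x, V₂ x + U₂ x ≤ L) :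
    ∫ x in unitCube d, ∑ i, (partialDeriv i U₁ x - partialDeriv i U₂ x) ^ 2 ≤
      exp L * ∫ x in unitCube d, (V₁ x - V₂ x) ^ 2 := by
  set W := fun x => U₁ x - U₂ x
  have hW : ContDiff ℝ 2 W := hU₁.sub hU₂
  have hpt : ∀ x, -(W x * laplacian W x) ≤ exp L * (V₁ x - V₂ x) ^ 2 := fun x => by
    rw [laplacian_sub hU₁ hU₂, hΔ₁, hΔ₂]
    convert mul_exp_sub_exp_le (δ := V₁ x - V₂ x) (hL₁ x) (hL₂ x) using 1
    ring
  have hgrad : ∀ x, ∑ i, partialDeriv i W x ^ 2 =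
      ∑ i, (partialDeriv i U₁ x - partialDeriv i U₂ x) ^ 2 := fun x => by
    simp only [W, partialDeriv_sub (hU₁.differentiable two_ne_zero x)
      (hU₂.differentiable two_ne_zero x)]
  calc _ = ∫ x in unitCube d, ∑ i, partialDeriv i W x ^ 2 := by simp only [hgrad]
    _ = ∫ x in unitCube d, -(W x * laplacian W x) := by
      rw [integral_unitCube_sum_sq_partialDeriv_eq_neg_integral_mul_laplacian hW
        fun k x => by simp [W, hU₁p k x, hU₂p k x], integral_neg]
    _ ≤ ∫ x in unitCube d, exp L * (V₁ x - V₂ x) ^ 2 :=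
      setIntegral_mono_on (hW.continuous.mul hW.continuous_laplacian).neg.integrableOn_unitCube
        (continuous_const.mul ((hV₁.sub hV₂).pow 2)).integrableOn_unitCube measurableSet_unitCube
        fun x _ => hpt x
    _ = _ := integral_const_mul _ _

end Torus

theorem vpme_field_stability_general (d : ℕ) (K : ℝ) :
    ∃ C : ℝ, ∀ V₁ V₂ U₁ U₂ : EuclideanSpace ℝ (Fin d) → ℝ,
      Continuous V₁ → Continuous V₂ →
      (∀ x, |V₁ x| ≤ K) → (∀ x, |V₂ x| ≤ K) →
      (∀ x (k : Fin d), V₁ (x + EuclideanSpace.single k 1) = V₁ x) →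
      (∀ x (k : Fin d), V₂ (x + EuclideanSpace.single k 1) = V₂ x) →
      ContDiff ℝ 2 U₁ → ContDiff ℝ 2 U₂ →
      (∀ x (k : Fin d), U₁ (x + EuclideanSpace.single k 1) = U₁ x) →
      (∀ x (k : Fin d), U₂ (x + EuclideanSpace.single k 1) = U₂ x) →
      (∀ x, (∑ i, fderiv ℝ
          (fun z => fderiv ℝ U₁ z (EuclideanSpace.single i 1)) x (EuclideanSpace.single i 1))
        = Real.exp (V₁ x + U₁ x) - 1) →
      (∀ x, (∑ i, fderiv ℝ
          (fun z => fderiv ℝ U₂ z (EuclideanSpace.single i 1)) x (EuclideanSpace.single i 1))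
        = Real.exp (V₂ x + U₂ x) - 1) →
      (∫ x in {x : EuclideanSpace ℝ (Fin d) | ∀ i, x i ∈ Set.Ico (0:ℝ) 1},
          ∑ i, (fderiv ℝ U₁ x (EuclideanSpace.single i 1)
            - fderiv ℝ U₂ x (EuclideanSpace.single i 1)) ^ 2)
        ≤ Real.exp C *
          ∫ x in {x : EuclideanSpace ℝ (Fin d) | ∀ i, x i ∈ Set.Ico (0:ℝ) 1},
            (V₁ x - V₂ x) ^ 2 := by
  refine ⟨2 * K, fun V₁ V₂ U₁ U₂ hV₁ hV₂ hV₁K hV₂K _ _ hU₁ hU₂ hU₁p hU₂p hΔ₁ hΔ₂ => ?_⟩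
  have hV₁K' := fun x => abs_le.1 (hV₁K x)
  have hV₂K' := fun x => abs_le.1 (hV₂K x)
  have hU₁K := le_of_laplacian_eq_exp_sub_one hU₁ (fun k x => hU₁p x k) hΔ₁ fun x => (hV₁K' x).1
  have hU₂K := le_of_laplacian_eq_exp_sub_one hU₂ (fun k x => hU₂p x k) hΔ₂ fun x => (hV₂K' x).1
  exact integral_unitCube_sum_sq_partialDeriv_sub_le hV₁ hV₂ hU₁ hU₂ (fun k x => hU₁p x k)
    (fun k x => hU₂p x k) hΔ₁ hΔ₂ (fun x => by linarith [(hV₁K' x).2, hU₁K x])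
    (fun x => by linarith [(hV₂K' x).2, hU₂K x])

/-- Stability of the nonlinear part of the electric field in the VPME system, on the torus
(modelled by ℤ^d-periodic functions on ℝ^d, integrating over the unit box): if
ΔU_i = e^{V_i + U_i} − 1 with ‖V_i‖_∞ ≤ K, then
‖∇U₁ − ∇U₂‖²_{L²} ≤ e^{C(K)} ‖V₁ − V₂‖²_{L²} with C(K) depending only on K and d. -/
theorem vpme_field_stability (d : ℕ) (hd : 1 ≤ d) (K : ℝ) (hK : 0 ≤ K) :
    ∃ C : ℝ, ∀ V₁ V₂ U₁ U₂ : EuclideanSpace ℝ (Fin d) → ℝ,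
      Continuous V₁ → Continuous V₂ →
      (∀ x, |V₁ x| ≤ K) → (∀ x, |V₂ x| ≤ K) →
      (∀ x (k : Fin d), V₁ (x + EuclideanSpace.single k 1) = V₁ x) →
      (∀ x (k : Fin d), V₂ (x + EuclideanSpace.single k 1) = V₂ x) →
      ContDiff ℝ 2 U₁ → ContDiff ℝ 2 U₂ →
      (∀ x (k : Fin d), U₁ (x + EuclideanSpace.single k 1) = U₁ x) →
      (∀ x (k : Fin d), U₂ (x + EuclideanSpace.single k 1) = U₂ x) →
      (∀ x, (∑ i, fderiv ℝ
          (fun z => fderiv ℝ U₁ z (EuclideanSpace.single i 1)) x (EuclideanSpace.single i 1))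
        = Real.exp (V₁ x + U₁ x) - 1) →
      (∀ x, (∑ i, fderiv ℝ
          (fun z => fderiv ℝ U₂ z (EuclideanSpace.single i 1)) x (EuclideanSpace.single i 1))
        = Real.exp (V₂ x + U₂ x) - 1) →
      (∫ x in {x : EuclideanSpace ℝ (Fin d) | ∀ i, x i ∈ Set.Ico (0:ℝ) 1},
          ∑ i, (fderiv ℝ U₁ x (EuclideanSpace.single i 1)
            - fderiv ℝ U₂ x (EuclideanSpace.single i 1)) ^ 2)
        ≤ Real.exp C *
          ∫ x in {x : EuclideanSpace ℝ (Fin d) | ∀ i, x i ∈ Set.Ico (0:ℝ) 1},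
            (V₁ x - V₂ x) ^ 2 :=
  vpme_field_stability_general d K
end
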